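/- arXiv:2111.13059 — 3 statements merged into one kernel-verified Lean document; each statement's English description precedes it below -/
import Mathlib

section
/- For all finite multiindices α, β one has s_α* s_β = q(α,β) s_{β∖α} s*_{α∖β}, where q(α,β) ∈ ℂ is the scalar defined by the recursion q(∅,β) = 1 and q(α,β) = q(α_1,β) · q(σ(α), β∖α_1). -/
open scoped BigOperators InnerProductSpace

namespace QCstar

variable {d : ℕ}

/-- `q(j,α)`: product of `q j a` over the prefix of `α` preceding the first
occurrence of `j` (the whole list if `j` does not occur in `α`). -/
def qOne (q : Fin d → Fin d → ℂ) (j : Fin d) (α : List (Fin d)) : ℂ :=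
  ((α.takeWhile fun a => a ≠ j).map (q j)).prod

/-- `q(α,β)` for finite multiindices, defined by recursion on `α`. -/
def qMul (q : Fin d → Fin d → ℂ) : List (Fin d) → List (Fin d) → ℂ
  | [], _ => 1
  | a :: α, β => qOne q a β * qMul q α (β.erase a)

/-- `s_α = s_{α₁} ⋯ s_{α_m}`. -/
def sWord {A : Type*} [Monoid A] (s : Fin d → A) (α : List (Fin d)) : A :=
  (α.map s).prod

/-- The shift on infinite multiindices. -/
def shift (β : ℕ → Fin d) : ℕ → Fin d := fun n => β (n + 1)

/-- The finite multiindex `(β₁,…,β_m)`. -/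
def prefixList (β : ℕ → Fin d) (m : ℕ) : List (Fin d) :=
  List.ofFn fun i : Fin m => β i

/-- `β ∼ α`: the tails agree up to a shift. -/
def equivTail (β α : ℕ → Fin d) : Prop := ∃ m n, shift^[m] β = shift^[n] α

/-- `q(α,β)` for infinite multiindices: the limit of `q` of the prefixes. -/
noncomputable def qInf (q : Fin d → Fin d → ℂ) (α β : ℕ → Fin d) : ℂ :=
  Filter.limUnder Filter.atTop fun m => qMul q (prefixList α m) (prefixList β m)

/-- `(j, β₁, β₂, …)`. -/
def consSeq (j : Fin d) (β : ℕ → Fin d) : ℕ → Fin d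
  | 0 => j
  | n + 1 => β n

open Classical in
/-- `β ∖ j` for an infinite multiindex: remove the first occurrence of `j`. -/
noncomputable def eraseInf (j : Fin d) (β : ℕ → Fin d) : ℕ → Fin d :=
  if h : ∃ n, β n = j then fun k => if k < Nat.find h then β k else β (k + 1) else β

open Classical in
/-- `q(j,β)` for an infinite multiindex containing `j`. -/
noncomputable def qOneInf (q : Fin d → Fin d → ℂ) (j : Fin d) (β : ℕ → Fin d) : ℂ :=
  if h : ∃ n, β n = j then ∏ k ∈ Finset.range (Nat.find h), q j (β k) else 0

/-- Entries of the Fock form. -/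
noncomputable def fockEntry (q : Fin d → Fin d → ℂ) (α β : List (Fin d)) : ℂ :=
  if β.Perm α then qMul q β α else 0

/-- The Fock sesquilinear form on the free complex vector space with basis the
finite multiindices (conjugate-linear in the first argument). -/
noncomputable def fockForm (q : Fin d → Fin d → ℂ) (x y : List (Fin d) →₀ ℂ) : ℂ :=
  ∑ α ∈ x.support, ∑ β ∈ y.support, (starRingEnd ℂ) (x α) * y β * fockEntry q α β
/-!
Induction on `α`. The single-letter case is pushed through `s_β` one letter at a time:
`s_j* s_b = q j b • s_b s_j*` for `b ≠ j` collects the factor `q(j,β)`, until the first `j`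
in `β` is cancelled by `s_j* s_j = 1` (or `s_j*` reaches the right end if `j ∉ β`). Then
`s_{aα}* s_β = s_α* (s_a* s_β)`, and the induction hypothesis is applied to `β ∖ a` if
`a ∈ β`, and to `β` otherwise, with the leftover `s_a*` joining `s*_{α∖β}`.
-/

@[simp]
lemma sWord_nil {A : Type*} [Monoid A] (s : Fin d → A) : sWord s [] = 1 := rfl

@[simp]
lemma sWord_cons {A : Type*} [Monoid A] (s : Fin d → A) (a : Fin d) (α : List (Fin d)) :
    sWord s (a :: α) = s a * sWord s α := by
  simp [sWord]

@[simp]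
lemma qOne_nil (q : Fin d → Fin d → ℂ) (j : Fin d) : qOne q j [] = 1 := rfl

@[simp]
lemma qOne_cons_self (q : Fin d → Fin d → ℂ) (j : Fin d) (β : List (Fin d)) :
    qOne q j (j :: β) = 1 := by
  simp [qOne]

lemma qOne_cons_of_ne (q : Fin d → Fin d → ℂ) {j b : Fin d} (h : b ≠ j) (β : List (Fin d)) :
    qOne q j (b :: β) = q j b * qOne q j β := by
  simp [qOne, List.takeWhile, h]

lemma qMul_cons (q : Fin d → Fin d → ℂ) (a : Fin d) (α β : List (Fin d)) :
    qMul q (a :: α) β = qOne q a β * qMul q α (β.erase a) := rfl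

section Relations

variable {A : Type*} [Semiring A] [StarRing A] [Algebra ℂ A]
  {q : Fin d → Fin d → ℂ} {s : Fin d → A}

lemma star_mul_sWord (hiso : ∀ i, star (s i) * s i = 1)
    (hrel : ∀ i j : Fin d, i ≠ j → star (s i) * s j = q i j • (s j * star (s i)))
    (j : Fin d) (β : List (Fin d)) :
    star (s j) * sWord s β
      = qOne q j β • (sWord s (β.erase j) * if j ∈ β then 1 else star (s j)) := by
  induction β with
  | nil => simp
  | cons b β ih =>
    by_cases hb : b = j
    · subst hb
      simp [← mul_assoc, hiso]
    · have hjβ' : j ∈ b :: β ↔ j ∈ β := by simp [Ne.symm hb]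
      calc star (s j) * sWord s (b :: β)
          = q j b • (s b * (star (s j) * sWord s β)) := by
            rw [sWord_cons, ← mul_assoc, hrel j b (Ne.symm hb), smul_mul_assoc, mul_assoc]
        _ = _ := by
            rw [ih, List.erase_cons_tail (by simpa using hb), sWord_cons, qOne_cons_of_ne q hb,
              mul_smul_comm, mul_smul, mul_assoc, if_congr hjβ' rfl rfl]

theorem star_sWord_mul_sWord (hiso : ∀ i, star (s i) * s i = 1)
    (hrel : ∀ i j : Fin d, i ≠ j → star (s i) * s j = q i j • (s j * star (s i)))
    (α β : List (Fin d)) :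
    star (sWord s α) * sWord s β
      = qMul q α β • (sWord s (β.diff α) * star (sWord s (α.diff β))) := by
  induction α generalizing β with
  | nil => simp [qMul]
  | cons a α ih =>
    rw [sWord_cons, star_mul, mul_assoc, star_mul_sWord hiso hrel, mul_smul_comm, qMul_cons,
      mul_smul, List.diff_cons]
    by_cases ha : a ∈ β
    · rw [if_pos ha, mul_one, ih, List.cons_diff_of_mem ha]
    · rw [if_neg ha, List.erase_of_not_mem ha, ← mul_assoc, ih, smul_mul_assoc,
        List.cons_diff_of_not_mem ha, sWord_cons, star_mul, mul_assoc]

end Relations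

theorem statement2_general {d : ℕ} (q : Fin d → Fin d → ℂ)
    {A : Type*} [NormedRing A] [StarRing A]
    [NormedAlgebra ℂ A]
    (s : Fin d → A) (hiso : ∀ i, star (s i) * s i = 1)
    (hrel : ∀ i j : Fin d, i ≠ j → star (s i) * s j = q i j • (s j * star (s i)))
    (α β : List (Fin d)) :
    star (sWord s α) * sWord s β
      = qMul q α β • (sWord s (β.diff α) * star (sWord s (α.diff β))) :=
  star_sWord_mul_sWord hiso hrel α β

theorem statement2 {d : ℕ} (hd : 2 ≤ d) (q : Fin d → Fin d → ℂ)
    (hsym : ∀ i j : Fin d, i ≠ j → q i j = (starRingEnd ℂ) (q j i))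
    (hlt : ∀ i j : Fin d, i ≠ j → ‖q i j‖ < 1)
    {A : Type*} [NormedRing A] [StarRing A] [CStarRing A] [CompleteSpace A]
    [NormedAlgebra ℂ A] [StarModule ℂ A]
    (s : Fin d → A) (hiso : ∀ i, star (s i) * s i = 1)
    (hrel : ∀ i j : Fin d, i ≠ j → star (s i) * s j = q i j • (s j * star (s i)))
    (α β : List (Fin d)) :
    star (sWord s α) * sWord s β
      = qMul q α β • (sWord s (β.diff α) * star (sWord s (α.diff β))) :=
  statement2_general q s hiso hrel α β

end QCstar
end

section
/- For all infinite multiindices α, β ∈ Λ, the limit q(α,β) = lim_{m→∞} q((α_1,…,α_m),(β_1,…,β_m)) exists. Moreover q(α,β) ≠ 0 only if there exists m such that σ^m(α) = σ^m(β) and (β_1,…,β_m) is a permutation of (α_1,…,α_m), in which case the sequence q((α_1,…,α_m),(β_1,…,β_m)) is eventually constant. -/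
/-!
Let `F(γ, δ)` (`qMulDegree`) be the number of factors `q i j` in the product defining
`q(γ, δ)`. Each factor has `i ≠ j`, so `‖q(γ, δ)‖ ≤ c ^ F(γ, δ)` with
`c = max_{i ≠ j} ‖q i j‖ < 1`. Along the prefixes of `α` and `β`, `F` is monotone, and it stays
put only if the next letter of `β` is the first still unmatched letter of the prefix of `α` and
the next letter of `α` is the first still unmatched letter of the prefix of `β` (unmatched in the
sense of `List.diff`). The two prefixes have equally many unmatched letters, so if `F` is bounded
they are eventually all used up; from then on the prefixes are permutations of each other and the
letters of `α` and `β` coincide. Otherwise `F → ∞` and `q` of the prefixes tends to `0`.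
Finally, appending a common word to two permuted words does not change `q`.
-/

open scoped BigOperators InnerProductSpace

namespace QCstar

variable {d : ℕ}

section ListDiff

variable {α : Type*} [DecidableEq α]

theorem takeWhile_ne_append_of_mem {a : α} {l : List α} (l' : List α) (h : a ∈ l) :
    ((l ++ l').takeWhile fun b => b ≠ a) = l.takeWhile fun b => b ≠ a := by
  induction l with
  | nil => simp at h
  | cons b l ih =>
    by_cases hb : b = a
    · simp [hb]
    · have hb' : decide (b ≠ a) = true := by simpa using hb
      rw [List.cons_append, List.takeWhile_cons_of_pos (p := fun c => decide (c ≠ a)) hb',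
        List.takeWhile_cons_of_pos (p := fun c => decide (c ≠ a)) hb',
        ih (by simpa [Ne.symm hb] using h)]

theorem takeWhile_ne_of_not_mem {a : α} {l : List α} (h : a ∉ l) :
    (l.takeWhile fun b => b ≠ a) = l :=
  List.takeWhile_eq_self_iff.2 fun b hb => by simpa using ne_of_mem_of_not_mem hb h

theorem takeWhile_ne_cons_eq_nil_iff {a y : α} {l : List α} :
    ((a :: l).takeWhile fun b => b ≠ y) = [] ↔ a = y := by
  simp [List.takeWhile_cons]

theorem append_singleton_diff (δ γ : List α) (y : α) :
    (δ ++ [y]).diff γ = δ.diff γ ++ if y ∈ γ.diff δ then [] else [y] := by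
  induction γ generalizing δ with
  | nil => simp
  | cons a γ ih =>
    by_cases ha : a ∈ δ
    · simp only [List.diff_cons, List.erase_append_left _ ha, ih, List.cons_diff, if_pos ha]
    · by_cases hy : y = a
      · subst hy
        simp [List.diff_cons, List.erase_append_right _ ha, List.erase_of_not_mem ha,
          List.cons_diff, ha]
      · simp [List.diff_cons, List.erase_append_right _ ha, List.erase_of_not_mem ha,
          List.cons_diff, ha, hy, ih]

theorem length_diff_comm {γ δ : List α} (h : γ.length = δ.length) :
    (γ.diff δ).length = (δ.diff γ).length := by
  have := congrArg Multiset.card (Multiset.union_comm (γ : Multiset α) δ)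
  simp only [Multiset.union_def, Multiset.coe_sub, Multiset.card_add, Multiset.coe_card] at this
  omega

theorem perm_of_diff_eq_nil {γ δ : List α} (h : δ.diff γ = []) (hlen : γ.length = δ.length) :
    δ.Perm γ := by
  have : (δ : Multiset α) ≤ γ := by
    rw [← tsub_eq_zero_iff_le, Multiset.coe_sub, h, Multiset.coe_nil]
  exact (Multiset.coe_le.1 this).perm_of_length_le hlen.le

theorem append_diff_of_perm {γ δ : List α} (h : δ.Perm γ) (ρ : List α) :
    (δ ++ ρ).diff γ = ρ := by
  rw [← h.diff_left]
  clear h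
  induction δ with
  | nil => simp
  | cons a δ ih => simp [List.diff_cons, ih]

end ListDiff

def qMulDegree : List (Fin d) → List (Fin d) → ℕ
  | [], _ => 0
  | a :: γ, δ => (δ.takeWhile fun b => b ≠ a).length + qMulDegree γ (δ.erase a)

theorem qMulDegree_append_singleton_left (γ δ : List (Fin d)) (x : Fin d) :
    qMulDegree (γ ++ [x]) δ
      = qMulDegree γ δ + ((δ.diff γ).takeWhile fun b => b ≠ x).length := by
  induction γ generalizing δ with
  | nil => simp [qMulDegree]
  | cons a γ ih => simp only [List.cons_append, qMulDegree, ih, List.diff_cons]; ring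

theorem qMulDegree_append_singleton_right (γ δ : List (Fin d)) (y : Fin d) :
    qMulDegree γ (δ ++ [y])
      = qMulDegree γ δ + ((γ.diff δ).takeWhile fun b => b ≠ y).length := by
  induction γ generalizing δ with
  | nil => simp [qMulDegree]
  | cons a γ ih =>
    by_cases ha : a ∈ δ
    · simp only [qMulDegree, takeWhile_ne_append_of_mem _ ha, List.erase_append_left _ ha, ih,
        List.cons_diff, if_pos ha]
      ring
    · have hδ : ∀ b ∈ δ, decide (b ≠ a) = true := fun b hb => by
        simpa using ne_of_mem_of_not_mem hb ha
      simp only [qMulDegree, List.takeWhile_append_of_pos hδ, takeWhile_ne_of_not_mem ha,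
        List.erase_append_right _ ha, List.erase_of_not_mem ha, List.cons_diff, if_neg ha]
      by_cases hy : y = a
      · subst hy
        simp
      · rw [List.takeWhile_cons_of_pos (p := fun b => decide (b ≠ y))
          (by simpa using Ne.symm hy)]
        have hay : a ∉ [y] := by simpa using Ne.symm hy
        rw [takeWhile_ne_of_not_mem hay, List.erase_of_not_mem hay, ih]
        simp only [List.length_append, List.length_cons, List.length_nil]
        ring

theorem qMulDegree_append_append (γ δ : List (Fin d)) (x y : Fin d) :
    qMulDegree (γ ++ [x]) (δ ++ [y]) = qMulDegree γ δ
      + ((γ.diff δ).takeWhile fun b => b ≠ y).length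
      + (((δ ++ [y]).diff γ).takeWhile fun b => b ≠ x).length := by
  rw [qMulDegree_append_singleton_left, qMulDegree_append_singleton_right]

theorem nnnorm_qOne_le {q : Fin d → Fin d → ℂ} {c : NNReal}
    (hq : ∀ i j, i ≠ j → ‖q i j‖₊ ≤ c) (a : Fin d) (δ : List (Fin d)) :
    ‖qOne q a δ‖₊ ≤ c ^ (δ.takeWhile fun b => b ≠ a).length := by
  have := List.prod_le_pow_card ((δ.takeWhile fun b => b ≠ a).map fun b => ‖q a b‖₊) c
    fun r hr => by
      obtain ⟨b, hb, rfl⟩ := List.mem_map.1 hr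
      exact hq a b (by simpa using List.mem_takeWhile_imp hb : b ≠ a).symm
  simpa [qOne, List.nnnorm_prod, List.map_map, Function.comp_def] using this

theorem nnnorm_qMul_le {q : Fin d → Fin d → ℂ} {c : NNReal}
    (hq : ∀ i j, i ≠ j → ‖q i j‖₊ ≤ c) (γ δ : List (Fin d)) :
    ‖qMul q γ δ‖₊ ≤ c ^ qMulDegree γ δ := by
  induction γ generalizing δ with
  | nil => simp [qMul, qMulDegree]
  | cons a γ ih =>
    rw [qMul, qMulDegree, nnnorm_mul, pow_add]
    exact mul_le_mul' (nnnorm_qOne_le hq a δ) (ih _)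

theorem qMul_append_left (q : Fin d → Fin d → ℂ) (γ ρ ε : List (Fin d)) :
    qMul q (γ ++ ρ) ε = qMul q γ ε * qMul q ρ (ε.diff γ) := by
  induction γ generalizing ε with
  | nil => simp [qMul]
  | cons a γ ih => simp only [List.cons_append, qMul, ih, List.diff_cons, mul_assoc]

theorem qMul_append_right_of_subperm (q : Fin d → Fin d → ℂ) {γ δ : List (Fin d)}
    (h : γ.Subperm δ) (σ : List (Fin d)) : qMul q γ (δ ++ σ) = qMul q γ δ := by
  induction γ generalizing δ with
  | nil => rfl
  | cons a γ ih =>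
    have ha : a ∈ δ := h.subset List.mem_cons_self
    have hγ : γ.Subperm (δ.erase a) := by simpa using h.erase a
    simp only [qMul, qOne, takeWhile_ne_append_of_mem _ ha, List.erase_append_left _ ha, ih hγ]

theorem qMul_self (q : Fin d → Fin d → ℂ) (ρ : List (Fin d)) : qMul q ρ ρ = 1 := by
  induction ρ with
  | nil => rfl
  | cons a ρ ih => simp [qMul, qOne, ih]

theorem qMul_append_append_of_perm (q : Fin d → Fin d → ℂ) {γ δ : List (Fin d)}
    (h : γ.Perm δ) (ρ : List (Fin d)) : qMul q (γ ++ ρ) (δ ++ ρ) = qMul q γ δ := by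
  rw [qMul_append_left, qMul_append_right_of_subperm q h.subperm, append_diff_of_perm h.symm,
    qMul_self, mul_one]

section DegreeStep

variable {γ δ : List (Fin d)} {x y : Fin d}

theorem takeWhile_eq_nil_of_qMulDegree_append_append
    (h : qMulDegree (γ ++ [x]) (δ ++ [y]) = qMulDegree γ δ) :
    ((γ.diff δ).takeWhile fun b => b ≠ y) = [] ∧
      (((δ ++ [y]).diff γ).takeWhile fun b => b ≠ x) = [] := by
  rw [qMulDegree_append_append] at h
  exact ⟨List.length_eq_zero_iff.1 (by omega), List.length_eq_zero_iff.1 (by omega)⟩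

theorem length_diff_append_lt (hlen : γ.length = δ.length)
    (h : qMulDegree (γ ++ [x]) (δ ++ [y]) = qMulDegree γ δ) (hne : δ.diff γ ≠ []) :
    ((δ ++ [y]).diff (γ ++ [x])).length < (δ.diff γ).length := by
  obtain ⟨hU, hL⟩ := takeWhile_eq_nil_of_qMulDegree_append_append h
  obtain ⟨a, U, hγδ⟩ : ∃ a U, γ.diff δ = a :: U := List.exists_cons_of_length_pos <| by
    rw [length_diff_comm hlen]
    exact List.length_pos_iff.2 hne
  have hya : a = y := takeWhile_ne_cons_eq_nil_iff.1 (hγδ ▸ hU)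
  have hδy : (δ ++ [y]).diff γ = δ.diff γ := by
    rw [append_singleton_diff, if_pos (by simp [hγδ, hya]), List.append_nil]
  obtain ⟨b, L, hδγ⟩ := List.exists_cons_of_ne_nil hne
  have hbx : b = x := takeWhile_ne_cons_eq_nil_iff.1 (by rwa [hδy, hδγ] at hL)
  rw [List.diff_append, hδy, hδγ, hbx]
  simp

theorem eq_and_diff_append_eq_nil (hlen : γ.length = δ.length)
    (h : qMulDegree (γ ++ [x]) (δ ++ [y]) = qMulDegree γ δ) (hnil : δ.diff γ = []) :
    x = y ∧ (δ ++ [y]).diff (γ ++ [x]) = [] := by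
  obtain ⟨-, hL⟩ := takeWhile_eq_nil_of_qMulDegree_append_append h
  have hγδ : γ.diff δ = [] :=
    List.length_eq_zero_iff.1 (by rw [length_diff_comm hlen, hnil]; rfl)
  have hδy : (δ ++ [y]).diff γ = [y] := by simp [append_singleton_diff, hnil, hγδ]
  have hyx : y = x := takeWhile_ne_cons_eq_nil_iff.1 (hδy ▸ hL)
  refine ⟨hyx.symm, ?_⟩
  rw [List.diff_append, hδy, hyx]
  simp

end DegreeStep

theorem shift_iterate_apply (α : ℕ → Fin d) (m n : ℕ) : shift^[m] α n = α (m + n) := by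
  induction m generalizing n with
  | zero => simp
  | succ m ih =>
    rw [Function.iterate_succ_apply', shift, ih]
    congr 1
    omega

theorem prefixList_length (α : ℕ → Fin d) (m : ℕ) : (prefixList α m).length = m := by
  simp [prefixList]

theorem prefixList_add (α : ℕ → Fin d) (m k : ℕ) :
    prefixList α (m + k) = prefixList α m ++ prefixList (shift^[m] α) k := by
  simp [prefixList, List.ofFn_add, shift_iterate_apply]

theorem prefixList_succ (α : ℕ → Fin d) (m : ℕ) :
    prefixList α (m + 1) = prefixList α m ++ [α m] := by
  rw [prefixList_add]
  simp [prefixList, shift_iterate_apply]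

theorem qMul_prefixList_eq_of_tail_eq (q : Fin d → Fin d → ℂ) {α β : ℕ → Fin d} {m : ℕ}
    (htail : shift^[m] α = shift^[m] β) (hperm : (prefixList β m).Perm (prefixList α m))
    (n : ℕ) (hn : m ≤ n) :
    qMul q (prefixList α n) (prefixList β n) = qMul q (prefixList α m) (prefixList β m) := by
  obtain ⟨k, rfl⟩ := Nat.exists_eq_add_of_le hn
  rw [prefixList_add, prefixList_add, htail, qMul_append_append_of_perm q hperm.symm]

section Degree

variable {α β : ℕ → Fin d}

theorem monotone_qMulDegree_prefixList :
    Monotone fun n => qMulDegree (prefixList α n) (prefixList β n) :=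
  monotone_nat_of_le_succ fun n => by
    simp only [prefixList_succ, qMulDegree_append_append]
    omega

theorem exists_diff_prefixList_eq_nil (m : ℕ)
    (hstable : ∀ n, m ≤ n → qMulDegree (prefixList α n) (prefixList β n)
      = qMulDegree (prefixList α m) (prefixList β m)) :
    ∃ n, m ≤ n ∧ (prefixList β n).diff (prefixList α n) = [] := by
  induction hℓ : ((prefixList β m).diff (prefixList α m)).length using Nat.strong_induction_on
    generalizing m with
  | _ ℓ ih =>
    by_cases hnil : (prefixList β m).diff (prefixList α m) = []
    · exact ⟨m, le_rfl, hnil⟩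
    have hstep := hstable (m + 1) (by omega)
    rw [prefixList_succ, prefixList_succ] at hstep
    have hlt := length_diff_append_lt (by simp [prefixList_length]) hstep hnil
    rw [← prefixList_succ, ← prefixList_succ, hℓ] at hlt
    obtain ⟨n, hn, hn'⟩ := ih _ hlt (m + 1)
      (fun n hn => by rw [hstable n (by omega), prefixList_succ, prefixList_succ, hstep]) rfl
    exact ⟨n, by omega, hn'⟩

theorem tail_eq_of_diff_prefixList_eq_nil {n : ℕ}
    (hstable : ∀ k, n ≤ k → qMulDegree (prefixList α k) (prefixList β k)
      = qMulDegree (prefixList α n) (prefixList β n))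
    (hnil : (prefixList β n).diff (prefixList α n) = []) :
    shift^[n] α = shift^[n] β := by
  have hstep : ∀ k, n ≤ k → qMulDegree (prefixList α k ++ [α k]) (prefixList β k ++ [β k])
      = qMulDegree (prefixList α k) (prefixList β k) := fun k hk => by
    rw [← prefixList_succ, ← prefixList_succ, hstable k hk, hstable (k + 1) (by omega)]
  have hlen : ∀ k, (prefixList α k).length = (prefixList β k).length := by
    simp [prefixList_length]
  have hnil' : ∀ k, n ≤ k → (prefixList β k).diff (prefixList α k) = [] := fun k hk => by
    induction k, hk using Nat.le_induction with
    | base => exact hnil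
    | succ k hk ih =>
      rw [prefixList_succ, prefixList_succ]
      exact (eq_and_diff_append_eq_nil (hlen k) (hstep k hk) ih).2
  funext i
  rw [shift_iterate_apply, shift_iterate_apply]
  exact (eq_and_diff_append_eq_nil (hlen _) (hstep _ le_self_add) (hnil' _ le_self_add)).1

theorem tendsto_qMulDegree_prefixList
    (h : ¬∃ n, shift^[n] α = shift^[n] β ∧ (prefixList β n).Perm (prefixList α n)) :
    Filter.Tendsto (fun n => qMulDegree (prefixList α n) (prefixList β n))
      Filter.atTop Filter.atTop := by
  refine Filter.tendsto_atTop_atTop_of_monotone' monotone_qMulDegree_prefixList fun hbdd => h ?_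
  obtain ⟨m, hm⟩ := Nat.sSup_mem (Set.range_nonempty _) hbdd
  have hstable : ∀ n, m ≤ n → qMulDegree (prefixList α n) (prefixList β n)
      = qMulDegree (prefixList α m) (prefixList β m) := fun n hn =>
    le_antisymm ((le_csSup hbdd ⟨n, rfl⟩).trans_eq hm.symm) (monotone_qMulDegree_prefixList hn)
  obtain ⟨n, hn, hnil⟩ := exists_diff_prefixList_eq_nil m hstable
  have hstable' : ∀ k, n ≤ k → qMulDegree (prefixList α k) (prefixList β k)
      = qMulDegree (prefixList α n) (prefixList β n) := fun k hk => by
    rw [hstable k (by omega), hstable n hn]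
  exact ⟨n, tail_eq_of_diff_prefixList_eq_nil hstable' hnil,
    perm_of_diff_eq_nil hnil (by simp [prefixList_length])⟩

end Degree

theorem exists_nnnorm_le_lt_one {ι E : Type*} [Fintype ι] [DecidableEq ι]
    [SeminormedAddGroup E] {f : ι → ι → E} (hf : ∀ i j, i ≠ j → ‖f i j‖ < 1) :
    ∃ c : NNReal, c < 1 ∧ ∀ i j, i ≠ j → ‖f i j‖₊ ≤ c := by
  refine ⟨Finset.univ.offDiag.sup fun p => ‖f p.1 p.2‖₊, ?_, fun i j hij => ?_⟩
  · refine (Finset.sup_lt_iff zero_lt_one).2 fun p hp => ?_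
    exact hf p.1 p.2 (Finset.mem_offDiag.1 hp).2.2
  · exact Finset.le_sup (f := fun p : ι × ι => ‖f p.1 p.2‖₊) (b := (i, j))
      (Finset.mem_offDiag.2 ⟨Finset.mem_univ i, Finset.mem_univ j, hij⟩)

theorem statement4_general {d : ℕ} (q : Fin d → Fin d → ℂ)
    (hlt : ∀ i j : Fin d, i ≠ j → ‖q i j‖ < 1)
    (α β : ℕ → Fin d) :
    ∃ L : ℂ,
      Filter.Tendsto (fun m => qMul q (prefixList α m) (prefixList β m))
        Filter.atTop (nhds L) ∧
      (L ≠ 0 → ∃ m : ℕ, shift^[m] α = shift^[m] β ∧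
        (prefixList β m).Perm (prefixList α m) ∧
        ∀ n : ℕ, m ≤ n → qMul q (prefixList α n) (prefixList β n)
          = qMul q (prefixList α m) (prefixList β m)) := by
  by_cases h : ∃ m, shift^[m] α = shift^[m] β ∧ (prefixList β m).Perm (prefixList α m)
  · obtain ⟨m, htail, hperm⟩ := h
    have hconst := qMul_prefixList_eq_of_tail_eq q htail hperm
    exact ⟨_, tendsto_atTop_of_eventually_const hconst, fun _ => ⟨m, htail, hperm, hconst⟩⟩
  · obtain ⟨c, hc, hq⟩ := exists_nnnorm_le_lt_one hlt
    have hbound (m : ℕ) : ‖qMul q (prefixList α m) (prefixList β m)‖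
        ≤ (c : ℝ) ^ qMulDegree (prefixList α m) (prefixList β m) := by
      exact_mod_cast nnnorm_qMul_le hq _ _
    refine ⟨0, squeeze_zero_norm hbound ?_, fun h0 => (h0 rfl).elim⟩
    exact (tendsto_pow_atTop_nhds_zero_of_lt_one c.2 hc).comp (tendsto_qMulDegree_prefixList h)

theorem statement4 {d : ℕ} (hd : 2 ≤ d) (q : Fin d → Fin d → ℂ)
    (hsym : ∀ i j : Fin d, i ≠ j → q i j = (starRingEnd ℂ) (q j i))
    (hlt : ∀ i j : Fin d, i ≠ j → ‖q i j‖ < 1)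
    (α β : ℕ → Fin d) :
    ∃ L : ℂ,
      Filter.Tendsto (fun m => qMul q (prefixList α m) (prefixList β m))
        Filter.atTop (nhds L) ∧
      (L ≠ 0 → ∃ m : ℕ, shift^[m] α = shift^[m] β ∧
        (prefixList β m).Perm (prefixList α m) ∧
        ∀ n : ℕ, m ≤ n → qMul q (prefixList α n) (prefixList β n)
          = qMul q (prefixList α m) (prefixList β m)) :=
  statement4_general q hlt α β

end QCstar
end

section
/- Fix α ∈ Λ. If Ω ∈ H_α satisfies S_j* Ω = 0 for all j = 1,…,d, then Ω = 0. In particular, the representation π_α admits no vacuum vector and hence is not unitarily equivalent to the Fock representation. -/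
/-! Every basis vector is a creation: `e β = S (β 0) (e (shift β))`. Hence the ranges of the
`S j` together span a dense subspace, and since `(range T)ᗮ = ker T†`, a vector killed by every
`S j†` is orthogonal to a dense subspace, i.e. zero. A unitary intertwiner with the Fock
representation would pull its vacuum back to such a nonzero vector. -/

open scoped BigOperators InnerProductSpace

namespace QCstar

variable {d : ℕ}

variable {H : Type*} [NormedAddCommGroup H] [InnerProductSpace ℂ H] [CompleteSpace H]

/-- `(H, e)` is a realization of the Hilbert space `H_α`: the vectors `e β`, `β ∼ α`,
have the prescribed inner products and their span is dense. -/
def IsRepSpace (q : Fin d → Fin d → ℂ) (α : ℕ → Fin d) (e : (ℕ → Fin d) → H) : Prop :=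
  (∀ β γ : ℕ → Fin d, equivTail β α → equivTail γ α → ⟪e β, e γ⟫_ℂ = qInf q γ β) ∧
  (Submodule.span ℂ (e '' {β | equivTail β α})).topologicalClosure = ⊤

/-- The operators `S j` act on the basis vectors of `H_α` as prescribed:
`S j e_β = e_{(j,β)}`, and the adjoint kills `e_β` if `j` does not occur in `β` and
sends `e_β` to `q(j,β) e_{β∖j}` otherwise. -/
def IsRepOps (q : Fin d → Fin d → ℂ) (α : ℕ → Fin d) (e : (ℕ → Fin d) → H)
    (S : Fin d → H →L[ℂ] H) : Prop :=
  (∀ (j : Fin d) (β : ℕ → Fin d), equivTail β α → S j (e β) = e (consSeq j β)) ∧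
  (∀ (j : Fin d) (β : ℕ → Fin d), equivTail β α → (¬∃ n, β n = j) →
    ContinuousLinearMap.adjoint (S j) (e β) = 0) ∧
  (∀ (j : Fin d) (β : ℕ → Fin d), equivTail β α → (∃ n, β n = j) →
    ContinuousLinearMap.adjoint (S j) (e β) = qOneInf q j β • e (eraseInf j β))

section Vacuum

variable {𝕜 E F ι : Type*} [RCLike 𝕜] [NormedAddCommGroup E] [InnerProductSpace 𝕜 E]
  [CompleteSpace E] [NormedAddCommGroup F] [InnerProductSpace 𝕜 F] [CompleteSpace F]

theorem eq_zero_of_forall_adjoint_apply_eq_zero (T : ι → E →L[𝕜] E)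
    (hT : (⨆ i, (T i).range).topologicalClosure = ⊤) {x : E}
    (hx : ∀ i, ContinuousLinearMap.adjoint (T i) x = 0) : x = 0 := by
  have hperp : x ∈ (⨆ i, (T i).range)ᗮ := by
    rw [← Submodule.iInf_orthogonal, Submodule.mem_iInf]
    intro i
    rw [ContinuousLinearMap.orthogonal_range]
    exact hx i
  rwa [Submodule.topologicalClosure_eq_top_iff.1 hT] at hperp

theorem adjoint_symm_apply_of_intertwines (U : E ≃ₗᵢ[𝕜] F) {T : E →L[𝕜] E} {T' : F →L[𝕜] F}
    (hU : ∀ x, U (T x) = T' (U x)) (y : F) :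
    ContinuousLinearMap.adjoint T (U.symm y) = U.symm (ContinuousLinearMap.adjoint T' y) := by
  refine ext_inner_left 𝕜 fun x => ?_
  rw [ContinuousLinearMap.adjoint_inner_right, ← U.inner_map_map, hU, U.apply_symm_apply,
    ← ContinuousLinearMap.adjoint_inner_right, ← U.inner_map_map, U.apply_symm_apply]

end Vacuum

theorem equivTail.shift {β α : ℕ → Fin d} (h : equivTail β α) : equivTail (shift β) α := by
  obtain ⟨m, n, h⟩ := h
  refine ⟨m, n + 1, ?_⟩
  rw [← Function.iterate_succ_apply, Function.iterate_succ_apply',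
    Function.iterate_succ_apply', h]

theorem consSeq_head_shift (β : ℕ → Fin d) : consSeq (β 0) (shift β) = β := by
  funext k
  cases k <;> rfl

theorem IsRepOps.iSup_range_dense {q : Fin d → Fin d → ℂ} {α : ℕ → Fin d}
    {e : (ℕ → Fin d) → H} {S : Fin d → H →L[ℂ] H} (hS : IsRepOps q α e S)
    (he : IsRepSpace q α e) : (⨆ j, (S j).range).topologicalClosure = ⊤ := by
  have hspan : Submodule.span ℂ (e '' {β | equivTail β α}) ≤ ⨆ j, (S j).range := by
    rw [Submodule.span_le]
    rintro _ ⟨β, hβ, rfl⟩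
    have hβS : e β = S (β 0) (e (shift β)) := by
      rw [hS.1 _ _ hβ.shift, consSeq_head_shift]
    rw [hβS]
    exact Submodule.mem_iSup_of_mem (β 0) ⟨_, rfl⟩
  exact top_le_iff.1 (he.2 ▸ Submodule.topologicalClosure_mono hspan)

theorem statement11_general {d : ℕ} (q : Fin d → Fin d → ℂ)
    (α : ℕ → Fin d) (e : (ℕ → Fin d) → H) (S : Fin d → H →L[ℂ] H)
    (he : IsRepSpace q α e) (hS : IsRepOps q α e S) :
    (∀ Ω : H, (∀ j : Fin d, ContinuousLinearMap.adjoint (S j) Ω = 0) → Ω = 0) ∧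
    (∀ (K : Type) (_ : NormedAddCommGroup K), ∀ (_ : InnerProductSpace ℂ K)
      (_ : CompleteSpace K), ∀ (S' : Fin d → K →L[ℂ] K) (Ω' : K), Ω' ≠ 0 →
      (∀ j : Fin d, ContinuousLinearMap.adjoint (S' j) Ω' = 0) →
      ¬∃ U : H ≃ₗᵢ[ℂ] K, ∀ (j : Fin d) (x : H), U (S j x) = S' j (U x)) := by
  have hvacuum (Ω : H) (hΩ : ∀ j, ContinuousLinearMap.adjoint (S j) Ω = 0) : Ω = 0 :=
    eq_zero_of_forall_adjoint_apply_eq_zero S (hS.iSup_range_dense he) hΩ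
  refine ⟨hvacuum, ?_⟩
  rintro K _ _ _ S' Ω' hΩ' hvacuum' ⟨U, hU⟩
  refine hΩ' (U.symm.map_eq_zero_iff.1 (hvacuum _ fun j => ?_))
  rw [adjoint_symm_apply_of_intertwines U (hU j), hvacuum' j, map_zero]

theorem statement11 {d : ℕ} (hd : 2 ≤ d) (q : Fin d → Fin d → ℂ)
    (hsym : ∀ i j : Fin d, i ≠ j → q i j = (starRingEnd ℂ) (q j i))
    (hlt : ∀ i j : Fin d, i ≠ j → ‖q i j‖ < 1)
    (α : ℕ → Fin d) (e : (ℕ → Fin d) → H) (S : Fin d → H →L[ℂ] H)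
    (he : IsRepSpace q α e) (hS : IsRepOps q α e S) :
    (∀ Ω : H, (∀ j : Fin d, ContinuousLinearMap.adjoint (S j) Ω = 0) → Ω = 0) ∧
    (∀ (K : Type) (_ : NormedAddCommGroup K), ∀ (_ : InnerProductSpace ℂ K)
      (_ : CompleteSpace K), ∀ (S' : Fin d → K →L[ℂ] K) (Ω' : K), Ω' ≠ 0 →
      (∀ j : Fin d, ContinuousLinearMap.adjoint (S' j) Ω' = 0) →
      ¬∃ U : H ≃ₗᵢ[ℂ] K, ∀ (j : Fin d) (x : H), U (S j x) = S' j (U x)) :=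
  statement11_general q α e S he hS

end QCstar
end
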